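/- arXiv:1710.05714 — 4 statements merged into one kernel-verified Lean document; each statement's English description precedes it below -/
import Mathlib

section
/- Let 𝒜 be a downset in B(n), and let ℐ be the set of the first |𝒜| elements of B(n) in the level-colex order. Then m(𝒜) ≤ m(ℐ). -/
open scoped Classical

/-- The set of maximal elements of a family of finite sets (sets of the family
not properly contained in another set of the family). -/
noncomputable def maximals (F : Finset (Finset ℕ)) : Finset (Finset ℕ) :=
  F.filter (fun A => ∀ B ∈ F, A ⊆ B → A = B)

/-- Colex order: `A < B` iff the largest element of `A Δ B` lies in `B`. -/
def colexLT (A B : Finset ℕ) : Prop :=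
  ∃ k, k ∈ B ∧ k ∉ A ∧ ∀ j, k < j → (j ∈ A ↔ j ∈ B)

/-- Level-colex order: first compare cardinalities, then use colex. -/
def lcLT (A B : Finset ℕ) : Prop :=
  A.card < B.card ∨ (A.card = B.card ∧ colexLT A B)

/-!
For a downset the maximal sets are exactly the sets outside the shadow, so
`m(𝒜) = |𝒜| - |∂𝒜|`; the initial segment `ℐ` is itself a downset. It therefore suffices that
level-colex initial segments of `B(n)` have the smallest shadow among all families of the same
size, a non-uniform Kruskal–Katona theorem. Its proof is the compression argument for
Kruskal–Katona: order sets by `(|A|, colex A)` and compress along disjoint pairs `(U, V)` with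
`U` before `V`. Such a compression moves the family strictly down in this order, does not
increase the shadow once all pairs with smaller `U` are compressed, and a family that is
compressed along every such pair is an initial segment.
-/

open Finset UV
open scoped FinsetFamily

lemma IsLowerSet.shadow_subset {α : Type*} [DecidableEq α] {𝒜 : Finset (Finset α)}
    (h𝒜 : IsLowerSet (𝒜 : Set (Finset α))) : ∂ 𝒜 ⊆ 𝒜 := by
  intro A hA
  obtain ⟨a, -, hins⟩ := mem_shadow_iff_insert_mem.1 hA
  exact h𝒜 (subset_insert a A) hins

namespace LevelColex

variable {α : Type*}

def key (A : Finset α) : ℕ ×ₗ Colex (Finset α) := toLex (#A, toColex A)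

lemma key_injective : Function.Injective (key : Finset α → ℕ ×ₗ Colex (Finset α)) :=
  fun _ _ h ↦ toColex_inj.1 (congrArg (·.2) h)

variable [LinearOrder α] {s U V A B : Finset α} {𝒜 ℐ ℐ₁ ℐ₂ : Finset (Finset α)}

lemma key_lt_key_of_card_lt (h : #A < #B) : key A < key B :=
  Prod.Lex.toLex_lt_toLex.2 (Or.inl h)

lemma nonempty_of_key_lt (h : key A < key B) : B.Nonempty := by
  rw [nonempty_iff_ne_empty]
  rintro rfl
  simp [key, Prod.Lex.toLex_lt_toLex] at h

lemma key_sdiff_lt_key_sdiff : key (A \ B) < key (B \ A) ↔ key A < key B := by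
  have hA := card_sdiff_add_card_inter A B
  have hB := card_sdiff_add_card_inter B A
  rw [inter_comm] at hB
  have hlt : #(A \ B) < #(B \ A) ↔ #A < #B := by omega
  have heq : #(A \ B) = #(B \ A) ↔ #A = #B := by omega
  simp only [key, Prod.Lex.toLex_lt_toLex, Colex.toColex_sdiff_lt_toColex_sdiff', hlt, heq]

lemma key_erase_le_key_erase_min' {x : α} (h : key U < key V) (hx : x ∈ U) (hV : V.Nonempty) :
    key (U.erase x) ≤ key (V.erase (V.min' hV)) := by
  rw [key, key, Prod.Lex.toLex_le_toLex, card_erase_of_mem hx, card_erase_of_mem (min'_mem V hV)]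
  have hU : 0 < #U := card_pos.2 ⟨x, hx⟩
  rcases Prod.Lex.toLex_lt_toLex.1 h with hcard | ⟨hcard, hcolex⟩
  · exact Or.inl (by dsimp only at hcard ⊢; omega)
  · exact Or.inr ⟨by dsimp only at hcard ⊢; omega,
      Colex.erase_le_erase_min' hcolex.le hcard.le hx⟩

def Useful (U V : Finset α) : Prop := Disjoint U V ∧ key U < key V

lemma Useful.key_compress_lt (h : Useful U V) (hA : compress U V A ≠ A) :
    key (compress U V A) < key A := by
  rw [compress, ite_ne_right_iff] at hA
  obtain ⟨⟨hUA, hVA⟩, -⟩ := hA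
  have hUA' := disjoint_left.1 hUA
  have hUV' := disjoint_left.1 h.1
  have hleft : ((A ∪ U) \ V) \ A = U := by
    ext a; simp only [mem_sdiff, mem_union]; grind
  have hright : A \ ((A ∪ U) \ V) = V := by
    ext a; simp only [mem_sdiff, mem_union]; grind
  rw [compress, if_pos ⟨hUA, hVA⟩, ← key_sdiff_lt_key_sdiff]
  simpa only [sup_eq_union, hleft, hright] using h.2

lemma card_shadow_compression_le_of_useful (hUV : Useful U V)
    (hsmall : ∀ U' ⊆ U, ∀ V' ⊆ V, Useful U' V' → #U' < #U → IsCompressed U' V' 𝒜) :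
    #(∂ (𝓒 U V 𝒜)) ≤ #(∂ 𝒜) := by
  have hV := nonempty_of_key_lt hUV.2
  refine card_shadow_compression_le U V fun x hx ↦ ⟨V.min' hV, min'_mem V hV, ?_⟩
  rcases (key_erase_le_key_erase_min' hUV.2 hx hV).lt_or_eq with hlt | heq
  · exact hsmall _ (erase_subset _ _) _ (erase_subset _ _)
      ⟨hUV.1.mono (erase_subset _ _) (erase_subset _ _), hlt⟩ (card_erase_lt_of_mem hx)
  · rw [key_injective heq]
    exact isCompressed_self _ _

lemma compress_subset_union (U V A : Finset α) : compress U V A ⊆ A ∪ U := by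
  unfold compress
  split_ifs
  · exact sdiff_subset
  · exact subset_union_left

lemma compression_subset_powerset (h𝒜 : 𝒜 ⊆ s.powerset) (hU : U ⊆ s) :
    𝓒 U V 𝒜 ⊆ s.powerset := by
  intro B hB
  rw [mem_compression] at hB
  rcases hB with ⟨hB, -⟩ | ⟨-, A, hA, rfl⟩
  · exact h𝒜 hB
  · exact mem_powerset.2 ((compress_subset_union U V A).trans
      (union_subset (mem_powerset.1 (h𝒜 hA)) hU))

lemma sum_compression_lt_sum {f : Finset α → ℕ}
    (hf : ∀ A ∈ 𝒜, compress U V A ≠ A → f (compress U V A) < f A) (h : 𝓒 U V 𝒜 ≠ 𝒜) :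
    ∑ A ∈ 𝓒 U V 𝒜, f A < ∑ A ∈ 𝒜, f A := by
  rw [compression] at h ⊢
  have hsplit : {A ∈ 𝒜 | compress U V A ∈ 𝒜} ∪ {A ∈ 𝒜 | compress U V A ∉ 𝒜} = 𝒜 :=
    filter_union_filter_not_eq _ _
  have hmoved : {A ∈ 𝒜 | compress U V A ∉ 𝒜}.Nonempty := by
    contrapose! h
    rw [filter_image, h, image_empty, union_empty]
    rwa [h, union_empty] at hsplit
  rw [sum_union compress_disjoint]
  conv_rhs => rw [← hsplit]
  rw [sum_union (disjoint_filter_filter_not _ _ _), add_lt_add_iff_left, filter_image,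
    sum_image compress_injOn]
  refine sum_lt_sum_of_nonempty hmoved fun A hA ↦ ?_
  obtain ⟨hA𝒜, hA'⟩ := mem_filter.1 hA
  exact hf A hA𝒜 fun heq ↦ hA' (by rwa [heq])

def rank (s A : Finset α) : ℕ := #{B ∈ s.powerset | key B < key A}

lemma rank_lt_rank (hB : B ⊆ s) (h : key B < key A) : rank s B < rank s A := by
  refine card_lt_card ⟨fun C hC ↦ ?_, fun hsub ↦ ?_⟩
  · rw [mem_filter] at hC ⊢
    exact ⟨hC.1, hC.2.trans h⟩
  · exact lt_irrefl _ (mem_filter.1 (hsub (mem_filter.2 ⟨mem_powerset.2 hB, h⟩))).2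

lemma exists_compressed (𝒜 : Finset (Finset α)) (h𝒜 : 𝒜 ⊆ s.powerset) :
    ∃ ℬ ⊆ s.powerset, #ℬ = #𝒜 ∧ #(∂ ℬ) ≤ #(∂ 𝒜) ∧
      ∀ U ⊆ s, ∀ V ⊆ s, Useful U V → IsCompressed U V ℬ := by
  set usable : Finset (Finset α × Finset α) :=
    {t ∈ s.powerset ×ˢ s.powerset | Useful t.1 t.2 ∧ ¬ IsCompressed t.1 t.2 𝒜}
  have mem_usable {U V : Finset α} (hU : U ⊆ s) (hV : V ⊆ s) (hUV : Useful U V)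
      (hnot : ¬ IsCompressed U V 𝒜) : (U, V) ∈ usable :=
    mem_filter.2 ⟨mem_product.2 ⟨mem_powerset.2 hU, mem_powerset.2 hV⟩, hUV, hnot⟩
  obtain husable | husable := usable.eq_empty_or_nonempty
  · refine ⟨𝒜, h𝒜, rfl, le_rfl, fun U hU V hV hUV ↦ ?_⟩
    by_contra hnot
    simpa [husable] using mem_usable hU hV hUV hnot
  obtain ⟨⟨U, V⟩, hmem, hmin⟩ := exists_min_image usable (fun t ↦ #t.1) husable
  obtain ⟨hUV_mem, hUV, hnot⟩ := mem_filter.1 hmem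
  dsimp only at hmin hUV hnot
  have hU : U ⊆ s := mem_powerset.1 (mem_product.1 hUV_mem).1
  have hV : V ⊆ s := mem_powerset.1 (mem_product.1 hUV_mem).2
  have hsmall : ∀ U' ⊆ U, ∀ V' ⊆ V, Useful U' V' → #U' < #U → IsCompressed U' V' 𝒜 :=
    fun U' hU' V' hV' hU'V' hcard ↦ by_contra fun hnot' ↦
      hcard.not_ge (hmin _ (mem_usable (hU'.trans hU) (hV'.trans hV) hU'V' hnot'))
  have hdec : ∑ A ∈ 𝓒 U V 𝒜, rank s A < ∑ A ∈ 𝒜, rank s A :=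
    sum_compression_lt_sum (fun A hA hmoved ↦ rank_lt_rank
      (mem_powerset.1 (compression_subset_powerset h𝒜 hU (compress_mem_compression hA)))
      (hUV.key_compress_lt hmoved)) hnot
  obtain ⟨ℬ, hℬ, hcard, hshadow, hcomp⟩ :=
    exists_compressed (𝓒 U V 𝒜) (compression_subset_powerset h𝒜 hU)
  exact ⟨ℬ, hℬ, hcard.trans (card_compression U V 𝒜),
    hshadow.trans (card_shadow_compression_le_of_useful hUV hsmall), hcomp⟩
termination_by ∑ A ∈ 𝒜, rank s A

def IsInitSeg (s : Finset α) (ℐ : Finset (Finset α)) : Prop :=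
  ℐ ⊆ s.powerset ∧ ∀ A ∈ ℐ, ∀ B ⊆ s, key B < key A → B ∈ ℐ

lemma isInitSeg_of_compressed (h𝒜 : 𝒜 ⊆ s.powerset)
    (h : ∀ U ⊆ s, ∀ V ⊆ s, Useful U V → IsCompressed U V 𝒜) : IsInitSeg s 𝒜 := by
  refine ⟨h𝒜, fun A hA B hB hBA ↦ ?_⟩
  have hA' : A ⊆ s := mem_powerset.1 (h𝒜 hA)
  have hcomp : IsCompressed (B \ A) (A \ B) 𝒜 := h _ (sdiff_subset.trans hB) _
    (sdiff_subset.trans hA') ⟨disjoint_sdiff_sdiff, key_sdiff_lt_key_sdiff.2 hBA⟩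
  have := compress_mem_compression (u := B \ A) (v := A \ B) hA
  rwa [compress_sdiff_sdiff, hcomp.eq] at this

lemma IsInitSeg.total (h₁ : IsInitSeg s ℐ₁) (h₂ : IsInitSeg s ℐ₂) : ℐ₁ ⊆ ℐ₂ ∨ ℐ₂ ⊆ ℐ₁ := by
  simp_rw [← sdiff_eq_empty_iff_subset]
  by_contra! h
  obtain ⟨⟨A, hA⟩, B, hB⟩ := h
  rw [mem_sdiff] at hA hB
  obtain hAB | hAB | hBA := lt_trichotomy (key A) (key B)
  · exact hA.2 (h₂.2 B hB.1 A (mem_powerset.1 (h₁.1 hA.1)) hAB)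
  · exact hB.2 (key_injective hAB ▸ hA.1)
  · exact hB.2 (h₁.2 A hA.1 B (mem_powerset.1 (h₂.1 hB.1)) hBA)

lemma IsInitSeg.eq_of_card_eq (h₁ : IsInitSeg s ℐ₁) (h₂ : IsInitSeg s ℐ₂) (h : #ℐ₁ = #ℐ₂) :
    ℐ₁ = ℐ₂ := by
  obtain h12 | h21 := h₁.total h₂
  · exact eq_of_subset_of_card_le h12 h.ge
  · exact (eq_of_subset_of_card_le h21 h.le).symm

lemma IsInitSeg.isLowerSet (h : IsInitSeg s ℐ) : IsLowerSet (ℐ : Set (Finset α)) := by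
  intro A B hBA hA
  obtain rfl | hne := eq_or_ne B A
  · exact hA
  · exact h.2 A hA B (hBA.trans (mem_powerset.1 (h.1 hA)))
      (key_lt_key_of_card_lt (card_lt_card (lt_of_le_of_ne hBA hne)))

theorem card_shadow_le_of_isInitSeg (h𝒜 : 𝒜 ⊆ s.powerset) (hℐ : IsInitSeg s ℐ)
    (hcard : #ℐ = #𝒜) : #(∂ ℐ) ≤ #(∂ 𝒜) := by
  obtain ⟨ℬ, hℬ, hℬcard, hshadow, hcomp⟩ := exists_compressed 𝒜 h𝒜
  rw [(isInitSeg_of_compressed hℬ hcomp).eq_of_card_eq hℐ (hℬcard.trans hcard.symm)] at hshadow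
  exact hshadow

end LevelColex

section maximals

variable {F : Finset (Finset ℕ)}

lemma maximals_eq_sdiff_shadow (hF : IsLowerSet (F : Set (Finset ℕ))) :
    maximals F = F \ ∂ F := by
  ext A
  simp only [maximals, mem_filter, mem_sdiff, mem_shadow_iff_insert_mem, not_exists, not_and]
  refine and_congr_right fun _ ↦ ⟨fun hmax a ha hins ↦ ?_, fun hnot B hB hAB ↦ ?_⟩
  · exact ha (hmax _ hins (subset_insert a A) ▸ mem_insert_self a A)
  · by_contra hne
    obtain ⟨a, haB, haA⟩ := exists_of_ssubset (hAB.ssubset_of_ne hne)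
    exact hnot a haA (hF (insert_subset haB hAB) hB)

lemma card_maximals_eq (hF : IsLowerSet (F : Set (Finset ℕ))) :
    #(maximals F) = #F - #(∂ F) := by
  rw [maximals_eq_sdiff_shadow hF, card_sdiff_of_subset hF.shadow_subset]

end maximals

lemma colexLT_iff_toColex_lt {A B : Finset ℕ} : colexLT A B ↔ toColex A < toColex B := by
  simp [colexLT, Colex.lt_iff_exists_filter_lt, filter_inj, and_assoc]

lemma lcLT_iff_key_lt {A B : Finset ℕ} : lcLT A B ↔ LevelColex.key A < LevelColex.key B := by
  rw [lcLT, colexLT_iff_toColex_lt, LevelColex.key, LevelColex.key, Prod.Lex.toLex_lt_toLex]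

theorem maximals_le_maximals_initSeg (n : ℕ) (𝒜 ℐ : Finset (Finset ℕ))
    (h𝒜 : ∀ A ∈ 𝒜, A ⊆ Finset.Icc 1 n)
    (hdown : ∀ A ∈ 𝒜, ∀ B ⊆ A, B ∈ 𝒜)
    (hℐ : ∀ A ∈ ℐ, A ⊆ Finset.Icc 1 n)
    (hinit : ∀ A ∈ ℐ, ∀ B ⊆ Finset.Icc 1 n, lcLT B A → B ∈ ℐ)
    (hcard : ℐ.card = 𝒜.card) :
    (maximals 𝒜).card ≤ (maximals ℐ).card := by
  have h𝒜lower : IsLowerSet (𝒜 : Set (Finset ℕ)) := fun A B hBA hA ↦ hdown A hA B hBA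
  have hℐinit : LevelColex.IsInitSeg (Icc 1 n) ℐ :=
    ⟨fun A hA ↦ mem_powerset.2 (hℐ A hA),
      fun A hA B hB hBA ↦ hinit A hA B hB (lcLT_iff_key_lt.2 hBA)⟩
  rw [card_maximals_eq h𝒜lower, card_maximals_eq hℐinit.isLowerSet, hcard]
  exact Nat.sub_le_sub_left (LevelColex.card_shadow_le_of_isInitSeg
    (fun A hA ↦ mem_powerset.2 (h𝒜 A hA)) hℐinit hcard) _
end

section
/- For every binary downset D of B(n), the width w(D) equals the number of special points contained in D, i.e., w(D) = |{A ∈ D : 2·|A ∩ {1,…,t}| ≤ t for every t ∈ [n]}|. -/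
open scoped Classical

/-- The width of a finite family of finite sets: the maximum size of an
antichain (under inclusion) contained in the family. -/
noncomputable def width (F : Finset (Finset ℕ)) : ℕ :=
  (F.powerset.filter (fun A => ∀ x ∈ A, ∀ y ∈ A, x ≠ y → ¬ x ⊆ y)).sup Finset.card

/-- Binary order: `A <_b B` iff the largest element of `A Δ B` lies in `B`. -/
def binLT (A B : Finset ℕ) : Prop :=
  ∃ k, k ∈ B ∧ k ∉ A ∧ ∀ j, k < j → (j ∈ A ↔ j ∈ B)

/-- A subset `A ⊆ [n]` is a special point if `2·|A ∩ [t]| ≤ t` for all `t ∈ [n]`. -/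
def SpecialPoint (n : ℕ) (A : Finset ℕ) : Prop :=
  ∀ t ∈ Finset.Icc 1 n, 2 * (A ∩ Finset.Icc 1 t).card ≤ t

/-!
The Greene–Kleitman symmetric chain decomposition of `B(n)` has exactly one chain per special
point, namely its minimum. A downset meets every chain in an initial segment, so sending a set to
the minimum of its chain maps any antichain of a downset `D` injectively into the special points
of `D`.

Conversely, a binary downset of `B(n+1)` either lies in `B(n)`, or consists of all of `B(n)`
together with the sets `A ∪ {n+1}`, `A ∈ D'`, for a binary downset `D'` of `B(n)`. In the second
case a level `L ≤ (n+1)/2` of `B(n)`, which meets every chain of `B(n)` through a special point of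
size `≤ min L (n - L)`, together with `{n+1}` added to an antichain of `D'` below level `L` (found
by induction), is an antichain of the required size.
-/

open Finset

lemma insert_eq_insert_iff {α : Type*} [DecidableEq α] {a : α} {s t : Finset α} (hs : a ∉ s)
    (ht : a ∉ t) : insert a s = insert a t ↔ s = t :=
  ⟨fun h => by rw [← erase_insert hs, h, erase_insert ht], congrArg _⟩

section Icc

variable {n : ℕ} {A : Finset ℕ}

lemma succ_notMem_of_subset_Icc (hA : A ⊆ Icc 1 n) : n + 1 ∉ A := fun h => by
  simpa using hA h

lemma subset_Icc_succ_of_subset_Icc (hA : A ⊆ Icc 1 n) : A ⊆ Icc 1 (n + 1) :=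
  hA.trans (Icc_subset_Icc_right n.le_succ)

lemma insert_subset_Icc_succ (hA : A ⊆ Icc 1 n) : insert (n + 1) A ⊆ Icc 1 (n + 1) :=
  insert_subset (by simp) (subset_Icc_succ_of_subset_Icc hA)

lemma subset_Icc_succ_cases (hA : A ⊆ Icc 1 (n + 1)) :
    A ⊆ Icc 1 n ∨ ∃ A' ⊆ Icc 1 n, A = insert (n + 1) A' := by
  have hA' : A.erase (n + 1) ⊆ Icc 1 n := fun x hx => by
    have := hA (mem_of_mem_erase hx)
    simp only [mem_Icc, mem_erase] at *
    omega
  by_cases h : n + 1 ∈ A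
  · exact .inr ⟨_, hA', (insert_erase h).symm⟩
  · exact .inl (erase_eq_of_notMem h ▸ hA')

end Icc

section SpecialPoint

variable {n : ℕ} {S : Finset ℕ}

lemma SpecialPoint.two_mul_card_le (hS : S ⊆ Icc 1 n) (h : SpecialPoint n S) :
    2 * #S ≤ n := by
  rcases n with _ | n
  · simp [subset_empty.1 hS]
  · simpa [inter_eq_left.2 hS] using h (n + 1) (by simp)

lemma specialPoint_insert_iff_of_lt {m : ℕ} (hm : n < m) :
    SpecialPoint n (insert m S) ↔ SpecialPoint n S := by
  refine forall₂_congr fun t ht => ?_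
  rw [insert_inter_of_notMem (by simp only [mem_Icc] at ht ⊢; omega)]

lemma specialPoint_succ_iff :
    SpecialPoint (n + 1) S ↔ SpecialPoint n S ∧ 2 * #(S ∩ Icc 1 (n + 1)) ≤ n + 1 := by
  refine ⟨fun h => ⟨fun t ht => h t ?_, h (n + 1) (by simp)⟩, fun ⟨h, hn⟩ t ht => ?_⟩
  · simp only [mem_Icc] at ht ⊢; omega
  · obtain rfl | ht' : t = n + 1 ∨ t ∈ Icc 1 n := by simp only [mem_Icc] at ht ⊢; omega
    exacts [hn, h t ht']

lemma specialPoint_succ_iff_of_subset (hS : S ⊆ Icc 1 n) :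
    SpecialPoint (n + 1) S ↔ SpecialPoint n S := by
  rw [specialPoint_succ_iff, inter_eq_left.2 (subset_Icc_succ_of_subset_Icc hS)]
  exact ⟨And.left, fun h => ⟨h, by have := h.two_mul_card_le hS; omega⟩⟩

lemma specialPoint_succ_insert_iff (hS : S ⊆ Icc 1 n) :
    SpecialPoint (n + 1) (insert (n + 1) S) ↔ SpecialPoint n S ∧ 2 * (#S + 1) ≤ n + 1 := by
  rw [specialPoint_succ_iff, specialPoint_insert_iff_of_lt n.lt_succ_self,
    inter_eq_left.2 (insert_subset_Icc_succ hS),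
    card_insert_of_notMem (succ_notMem_of_subset_Icc hS)]

end SpecialPoint

/-- The minimum of the de Bruijn–Greene–Kleitman symmetric chain of `B(n)` through `A`. A chain
`S ⊂ ⋯ ⊂ T` of `B(n)`, whose top `T` is recognised by `#T + #S = n`, splits in `B(n + 1)` into
`S ⊂ ⋯ ⊂ T ⊂ T ∪ {n + 1}` and a chain with minimum `S ∪ {n + 1}` made of the other sets with
`n + 1` added. -/
def gkMin : ℕ → Finset ℕ → Finset ℕ
  | 0, _ => ∅
  | n + 1, A =>
    if n + 1 ∈ A then
      if #(A.erase (n + 1)) + #(gkMin n (A.erase (n + 1))) = n then gkMin n (A.erase (n + 1))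
      else insert (n + 1) (gkMin n (A.erase (n + 1)))
    else gkMin n A

section gkMin

variable {n : ℕ} {A : Finset ℕ}

lemma gkMin_subset : ∀ n A, gkMin n A ⊆ A
  | 0, _ => empty_subset _
  | n + 1, A => by
    have h := (gkMin_subset n (A.erase (n + 1))).trans (erase_subset _ _)
    rw [gkMin]
    split_ifs with hA
    exacts [h, insert_subset hA h, gkMin_subset n A]

lemma gkMin_succ_of_subset (hA : A ⊆ Icc 1 n) : gkMin (n + 1) A = gkMin n A := by
  rw [gkMin, if_neg (succ_notMem_of_subset_Icc hA)]

lemma gkMin_succ_insert (hA : A ⊆ Icc 1 n) :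
    gkMin (n + 1) (insert (n + 1) A) =
      if #A + #(gkMin n A) = n then gkMin n A else insert (n + 1) (gkMin n A) := by
  rw [gkMin, if_pos (mem_insert_self _ _), erase_insert (succ_notMem_of_subset_Icc hA)]

lemma succ_notMem_gkMin (hA : A ⊆ Icc 1 n) : n + 1 ∉ gkMin n A :=
  succ_notMem_of_subset_Icc ((gkMin_subset n A).trans hA)

lemma card_add_card_gkMin_le : ∀ {n A}, A ⊆ Icc 1 n → #A + #(gkMin n A) ≤ n
  | 0, A, hA => by simp [subset_empty.1 hA, gkMin]
  | n + 1, A, hA => by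
    obtain hA | ⟨A, hA', rfl⟩ := subset_Icc_succ_cases hA
    · have := card_add_card_gkMin_le hA
      rw [gkMin_succ_of_subset hA]
      omega
    · have := card_add_card_gkMin_le hA'
      rw [gkMin_succ_insert hA', card_insert_of_notMem (succ_notMem_of_subset_Icc hA')]
      split_ifs with htop
      · omega
      · rw [card_insert_of_notMem (succ_notMem_gkMin hA')]
        omega

lemma specialPoint_gkMin : ∀ {n A}, A ⊆ Icc 1 n → SpecialPoint n (gkMin n A)
  | 0, _, _ => fun t ht => by simp at ht
  | n + 1, A, hA => by
    obtain hA | ⟨A, hA', rfl⟩ := subset_Icc_succ_cases hA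
    · rw [gkMin_succ_of_subset hA, specialPoint_succ_iff_of_subset ((gkMin_subset n A).trans hA)]
      exact specialPoint_gkMin hA
    · have hS := (gkMin_subset n A).trans hA'
      rw [gkMin_succ_insert hA']
      split_ifs with htop
      · exact (specialPoint_succ_iff_of_subset hS).2 (specialPoint_gkMin hA')
      · have := card_add_card_gkMin_le hA'
        have := card_le_card (gkMin_subset n A)
        exact (specialPoint_succ_insert_iff hS).2 ⟨specialPoint_gkMin hA', by omega⟩

lemma subset_of_gkMin_eq_of_card_le :
    ∀ {n A B}, A ⊆ Icc 1 n → B ⊆ Icc 1 n → gkMin n A = gkMin n B → #A ≤ #B → A ⊆ B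
  | 0, A, B, hA, _, _, _ => by simp [subset_empty.1 hA]
  | n + 1, A, B, hA, hB, heq, hcard => by
    obtain hA | ⟨A, hA', rfl⟩ := subset_Icc_succ_cases hA <;>
      obtain hB | ⟨B, hB', rfl⟩ := subset_Icc_succ_cases hB
    · rw [gkMin_succ_of_subset hA, gkMin_succ_of_subset hB] at heq
      exact subset_of_gkMin_eq_of_card_le hA hB heq hcard
    · rw [gkMin_succ_of_subset hA, gkMin_succ_insert hB'] at heq
      rw [card_insert_of_notMem (succ_notMem_of_subset_Icc hB')] at hcard
      split_ifs at heq with htop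
      · have := card_add_card_gkMin_le hA
        rw [heq] at this
        exact (subset_of_gkMin_eq_of_card_le hA hB' heq (by omega)).trans (subset_insert _ _)
      · exact absurd (heq ▸ mem_insert_self _ _) (succ_notMem_gkMin hA)
    · rw [gkMin_succ_insert hA', gkMin_succ_of_subset hB] at heq
      rw [card_insert_of_notMem (succ_notMem_of_subset_Icc hA')] at hcard
      split_ifs at heq with htop
      · have := card_add_card_gkMin_le hB
        rw [← heq] at this
        omega
      · exact absurd (heq ▸ mem_insert_self _ _) (succ_notMem_gkMin hB)
    · rw [gkMin_succ_insert hA', gkMin_succ_insert hB'] at heq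
      rw [card_insert_of_notMem (succ_notMem_of_subset_Icc hA'),
        card_insert_of_notMem (succ_notMem_of_subset_Icc hB')] at hcard
      refine insert_subset_insert _ (subset_of_gkMin_eq_of_card_le hA' hB' ?_ (by omega))
      split_ifs at heq with htopA htopB htopB
      · exact heq
      · exact absurd (heq ▸ mem_insert_self _ _) (succ_notMem_gkMin hA')
      · exact absurd (heq.symm ▸ mem_insert_self _ _) (succ_notMem_gkMin hB')
      · exact (insert_eq_insert_iff (succ_notMem_gkMin hA') (succ_notMem_gkMin hB')).1 heq

end gkMin

lemma exists_card_eq_gkMin_eq :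
    ∀ {n S}, S ⊆ Icc 1 n → SpecialPoint n S → ∀ {L}, #S ≤ L → L + #S ≤ n →
      ∃ A ⊆ Icc 1 n, #A = L ∧ gkMin n A = S
  | 0, S, hS, _, L, h1, h2 => by
    obtain rfl := subset_empty.1 hS
    exact ⟨∅, empty_subset _, by simp at h2; simp [h2], rfl⟩
  | n + 1, S, hS, hspec, L, h1, h2 => by
    obtain hS | ⟨S, hS', rfl⟩ := subset_Icc_succ_cases hS
    · rw [specialPoint_succ_iff_of_subset hS] at hspec
      by_cases hL : L + #S ≤ n
      · obtain ⟨A, hA, hAcard, hAS⟩ := exists_card_eq_gkMin_eq hS hspec h1 hL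
        exact ⟨A, subset_Icc_succ_of_subset_Icc hA, hAcard, by rw [gkMin_succ_of_subset hA, hAS]⟩
      · have := hspec.two_mul_card_le hS
        obtain ⟨A, hA, hAcard, hAS⟩ :=
          exists_card_eq_gkMin_eq hS hspec (L := n - #S) (by omega) (by omega)
        refine ⟨insert (n + 1) A, insert_subset_Icc_succ hA, ?_, ?_⟩
        · rw [card_insert_of_notMem (succ_notMem_of_subset_Icc hA)]
          omega
        · rw [gkMin_succ_insert hA, hAS, if_pos (by omega)]
    · rw [specialPoint_succ_insert_iff hS'] at hspec
      rw [card_insert_of_notMem (succ_notMem_of_subset_Icc hS')] at h1 h2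
      obtain ⟨A, hA, hAcard, hAS⟩ :=
        exists_card_eq_gkMin_eq hS' hspec.1 (L := L - 1) (by omega) (by omega)
      refine ⟨insert (n + 1) A, insert_subset_Icc_succ hA, ?_, ?_⟩
      · rw [card_insert_of_notMem (succ_notMem_of_subset_Icc hA)]
        omega
      · rw [gkMin_succ_insert hA, hAS, if_neg (by omega)]

lemma card_filter_specialPoint_le_choose (n L : ℕ) :
    #((Icc 1 n).powerset.filter fun S => SpecialPoint n S ∧ #S ≤ L ∧ L + #S ≤ n) ≤
      n.choose L :=
  calc _ ≤ #(powersetCard L (Icc 1 n)) := card_le_card_of_surjOn (gkMin n) fun S hS => by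
        rw [mem_coe, mem_filter, mem_powerset] at hS
        obtain ⟨A, hA, hAcard, hAS⟩ := exists_card_eq_gkMin_eq hS.1 hS.2.1 hS.2.2.1 hS.2.2.2
        exact ⟨A, mem_powersetCard.2 ⟨hA, hAcard⟩, hAS⟩
    _ = n.choose L := by simp

lemma le_width {F 𝒜 : Finset (Finset ℕ)} (h𝒜F : 𝒜 ⊆ F)
    (h𝒜 : IsAntichain (· ⊆ ·) (𝒜 : Set (Finset ℕ))) : #𝒜 ≤ width F :=
  le_sup (f := card) (mem_filter.2 ⟨mem_powerset.2 h𝒜F, fun _ hx _ hy => h𝒜 hx hy⟩)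

lemma width_le {F : Finset (Finset ℕ)} {k : ℕ}
    (h : ∀ 𝒜 ⊆ F, IsAntichain (· ⊆ ·) (𝒜 : Set (Finset ℕ)) → #𝒜 ≤ k) : width F ≤ k :=
  Finset.sup_le fun 𝒜 h𝒜 => by
    rw [mem_filter, mem_powerset] at h𝒜
    exact h 𝒜 h𝒜.1 fun _ hx _ hy => h𝒜.2 _ hx _ hy

lemma isAntichain_union_image_insert {α : Type*} [DecidableEq α] {a : α}
    {𝒜 ℬ : Finset (Finset α)} (h𝒜 : IsAntichain (· ⊆ ·) (𝒜 : Set (Finset α)))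
    (hℬ : IsAntichain (· ⊆ ·) (ℬ : Set (Finset α))) (ha𝒜 : ∀ X ∈ 𝒜, a ∉ X)
    (haℬ : ∀ Y ∈ ℬ, a ∉ Y) (hcard : ∀ X ∈ 𝒜, ∀ Y ∈ ℬ, #Y < #X) :
    IsAntichain (· ⊆ ·) ((𝒜 ∪ ℬ.image (insert a) : Finset (Finset α)) : Set (Finset α)) := by
  rw [coe_union, coe_image, isAntichain_union]
  refine ⟨h𝒜, ?_, ?_⟩
  · rintro _ ⟨Y, hY, rfl⟩ _ ⟨Z, hZ, rfl⟩ hne hYZ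
    rw [insert_subset_insert_iff (haℬ Y hY)] at hYZ
    exact hℬ hY hZ (fun h => hne (h ▸ rfl)) hYZ
  · rintro X hX _ ⟨Y, hY, rfl⟩ -
    refine ⟨fun hXY => ?_, fun hYX => ha𝒜 X hX (hYX (mem_insert_self a Y))⟩
    have := card_le_card ((subset_insert_iff_of_notMem (ha𝒜 X hX)).1 hXY)
    exact absurd (hcard X hX Y hY) (by omega)

lemma binLT_of_ssubset {A B : Finset ℕ} (h : B ⊂ A) : binLT B A := by
  have hne : (A \ B).Nonempty := sdiff_nonempty.2 h.2
  obtain ⟨hkA, hkB⟩ := mem_sdiff.1 ((A \ B).max'_mem hne)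
  refine ⟨_, hkA, hkB, fun j hj => ⟨fun hjB => h.1 hjB, fun hjA => by_contra fun hjB => ?_⟩⟩
  exact absurd ((A \ B).le_max' j (mem_sdiff.2 ⟨hjA, hjB⟩)) (by omega)

lemma binLT.insert {A B : Finset ℕ} {m : ℕ} (h : binLT B A) (hm : m ∉ A) :
    binLT (insert m B) (insert m A) := by
  obtain ⟨k, hkA, hkB, hk⟩ := h
  refine ⟨k, mem_insert_of_mem hkA, ?_, fun j hj => by simp only [mem_insert, hk j hj]⟩
  rw [mem_insert]
  rintro (rfl | hkB')
  exacts [hm hkA, hkB hkB']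

lemma binLT_of_succ_mem {n : ℕ} {A B : Finset ℕ} (hA : A ⊆ Icc 1 (n + 1)) (hnA : n + 1 ∈ A)
    (hB : B ⊆ Icc 1 n) : binLT B A :=
  ⟨n + 1, hnA, succ_notMem_of_subset_Icc hB, fun j hj =>
    iff_of_false (fun h => by have := mem_Icc.1 (hB h); omega)
      (fun h => by have := mem_Icc.1 (hA h); omega)⟩

structure IsBinaryDownset (n : ℕ) (D : Finset (Finset ℕ)) : Prop where
  subset_Icc : ∀ A ∈ D, A ⊆ Icc 1 n
  mem_of_binLT : ∀ A ∈ D, ∀ B ⊆ Icc 1 n, binLT B A → B ∈ D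

def topSlice (n : ℕ) (D : Finset (Finset ℕ)) : Finset (Finset ℕ) :=
  (Icc 1 n).powerset.filter fun A => insert (n + 1) A ∈ D

namespace IsBinaryDownset

variable {n : ℕ} {D : Finset (Finset ℕ)} {A B : Finset ℕ}

lemma mem_of_subset (hD : IsBinaryDownset n D) (hA : A ∈ D) (hBA : B ⊆ A) : B ∈ D := by
  obtain rfl | hne := eq_or_ne B A
  · exact hA
  · exact hD.mem_of_binLT A hA B (hBA.trans (hD.subset_Icc A hA))
      (binLT_of_ssubset (hBA.ssubset_of_ne hne))

lemma of_succ (hD : IsBinaryDownset (n + 1) D) (h : ∀ A ∈ D, n + 1 ∉ A) :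
    IsBinaryDownset n D where
  subset_Icc A hA := by
    obtain hA' | ⟨A', -, rfl⟩ := subset_Icc_succ_cases (hD.subset_Icc A hA)
    exacts [hA', absurd (mem_insert_self _ _) (h _ hA)]
  mem_of_binLT A hA B hB := hD.mem_of_binLT A hA B (subset_Icc_succ_of_subset_Icc hB)

lemma powerset_subset (hD : IsBinaryDownset (n + 1) D) (hA : A ∈ D) (hnA : n + 1 ∈ A) :
    (Icc 1 n).powerset ⊆ D := fun B hB =>
  have hB := mem_powerset.1 hB
  hD.mem_of_binLT A hA B (subset_Icc_succ_of_subset_Icc hB)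
    (binLT_of_succ_mem (hD.subset_Icc A hA) hnA hB)

lemma isBinaryDownset_topSlice (hD : IsBinaryDownset (n + 1) D) :
    IsBinaryDownset n (topSlice n D) where
  subset_Icc A hA := mem_powerset.1 (mem_filter.1 hA).1
  mem_of_binLT A hA B hB hBA := by
    obtain ⟨hA, hAD⟩ := mem_filter.1 hA
    refine mem_filter.2 ⟨mem_powerset.2 hB,
      hD.mem_of_binLT _ hAD _ (insert_subset_Icc_succ hB) ?_⟩
    exact hBA.insert (succ_notMem_of_subset_Icc (mem_powerset.1 hA))

end IsBinaryDownset

theorem card_le_card_filter_specialPoint {n : ℕ} {D 𝒜 : Finset (Finset ℕ)}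
    (hD : ∀ A ∈ D, A ⊆ Icc 1 n) (hdown : ∀ A ∈ D, ∀ B ⊆ A, B ∈ D) (h𝒜D : 𝒜 ⊆ D)
    (h𝒜 : IsAntichain (· ⊆ ·) (𝒜 : Set (Finset ℕ))) :
    #𝒜 ≤ #(D.filter fun A => SpecialPoint n A) := by
  refine card_le_card_of_injOn (gkMin n) (fun A hA => mem_filter.2
    ⟨hdown A (h𝒜D hA) _ (gkMin_subset n A), specialPoint_gkMin (hD A (h𝒜D hA))⟩) ?_
  intro A hA B hB heq
  by_contra hne
  rcases le_total #A #B with hAB | hBA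
  · exact h𝒜 hA hB hne (subset_of_gkMin_eq_of_card_le (hD A (h𝒜D hA)) (hD B (h𝒜D hB)) heq hAB)
  · exact h𝒜 hB hA (Ne.symm hne)
      (subset_of_gkMin_eq_of_card_le (hD B (h𝒜D hB)) (hD A (h𝒜D hA)) heq.symm hBA)

lemma card_filter_specialPoint_succ_le {n ℓ : ℕ} {D : Finset (Finset ℕ)}
    (hD : ∀ A ∈ D, A ⊆ Icc 1 (n + 1)) :
    #(D.filter fun A => SpecialPoint (n + 1) A ∧ #A < ℓ + 1) ≤ n.choose (min ℓ ((n + 1) / 2)) +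
      #((topSlice n D).filter fun A => SpecialPoint n A ∧ #A < min ℓ ((n + 1) / 2)) := by
  set L := min ℓ ((n + 1) / 2)
  have hsplit : (D.filter fun A => SpecialPoint (n + 1) A ∧ #A < ℓ + 1) ⊆
      ((Icc 1 n).powerset.filter fun S => SpecialPoint n S ∧ #S ≤ L ∧ L + #S ≤ n) ∪
        ((topSlice n D).filter fun A => SpecialPoint n A ∧ #A < L).image (insert (n + 1)) := by
    intro A hA
    obtain ⟨hAD, hspec, hcard⟩ := mem_filter.1 hA
    rw [mem_union, mem_image]
    obtain hA | ⟨A, hA', rfl⟩ := subset_Icc_succ_cases (hD A hAD)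
    · rw [specialPoint_succ_iff_of_subset hA] at hspec
      have := hspec.two_mul_card_le hA
      exact .inl (mem_filter.2 ⟨mem_powerset.2 hA, hspec, by omega, by omega⟩)
    · rw [specialPoint_succ_insert_iff hA'] at hspec
      rw [card_insert_of_notMem (succ_notMem_of_subset_Icc hA')] at hcard
      exact .inr ⟨A, mem_filter.2 ⟨mem_filter.2 ⟨mem_powerset.2 hA', hAD⟩, hspec.1, by omega⟩, rfl⟩
  exact (card_le_card hsplit).trans <| (card_union_le _ _).trans <|
    add_le_add (card_filter_specialPoint_le_choose n L) card_image_le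

theorem IsBinaryDownset.exists_isAntichain :
    ∀ {n D}, IsBinaryDownset n D → ∀ ℓ, ∃ 𝒜 ⊆ D, IsAntichain (· ⊆ ·) (𝒜 : Set (Finset ℕ)) ∧
      (∀ A ∈ 𝒜, #A < ℓ) ∧ #(D.filter fun A => SpecialPoint n A ∧ #A < ℓ) ≤ #𝒜
  | 0, D, hD, ℓ => by
    refine ⟨D.filter fun A => SpecialPoint 0 A ∧ #A < ℓ, filter_subset _ _, ?_,
      fun A hA => (mem_filter.1 hA).2.2, le_rfl⟩
    refine Set.Subsingleton.isAntichain (fun A hA B hB => ?_) _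
    rw [subset_empty.1 (hD.subset_Icc A (mem_filter.1 hA).1),
      subset_empty.1 (hD.subset_Icc B (mem_filter.1 hB).1)]
  | n + 1, D, hD, 0 => ⟨∅, empty_subset _, by simp, by simp, by simp⟩
  | n + 1, D, hD, ℓ + 1 => by
    by_cases htop : ∃ A ∈ D, n + 1 ∈ A
    swap
    · have hD' := hD.of_succ fun A hA hnA => htop ⟨A, hA, hnA⟩
      obtain ⟨𝒜, h𝒜D, h𝒜, hℓ, hcard⟩ := hD'.exists_isAntichain (ℓ + 1)
      refine ⟨𝒜, h𝒜D, h𝒜, hℓ, le_of_eq_of_le (congrArg card (filter_congr fun A hA => ?_)) hcard⟩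
      rw [specialPoint_succ_iff_of_subset (hD'.subset_Icc A hA)]
    obtain ⟨A₀, hA₀, hnA₀⟩ := htop
    set L := min ℓ ((n + 1) / 2)
    obtain ⟨𝒜', h𝒜'D, h𝒜', hℓ, hcard⟩ := hD.isBinaryDownset_topSlice.exists_isAntichain L
    have hnotMem : ∀ A ∈ 𝒜', n + 1 ∉ A := fun A hA =>
      succ_notMem_of_subset_Icc (hD.isBinaryDownset_topSlice.subset_Icc A (h𝒜'D hA))
    have hlevel : ∀ S ∈ powersetCard L (Icc 1 n), S ⊆ Icc 1 n ∧ #S = L := fun S hS =>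
      mem_powersetCard.1 hS
    have hdisj : Disjoint (powersetCard L (Icc 1 n)) (𝒜'.image (insert (n + 1))) :=
      disjoint_left.2 fun S hS hS' => by
        obtain ⟨A, -, rfl⟩ := mem_image.1 hS'
        exact succ_notMem_of_subset_Icc (hlevel _ hS).1 (mem_insert_self _ _)
    refine ⟨powersetCard L (Icc 1 n) ∪ 𝒜'.image (insert (n + 1)), ?_, ?_, ?_, ?_⟩
    · exact union_subset
        (fun S hS => hD.powerset_subset hA₀ hnA₀ (mem_powerset.2 (hlevel S hS).1))
        (image_subset_iff.2 fun A hA => (mem_filter.1 (h𝒜'D hA)).2)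
    · exact isAntichain_union_image_insert (Set.sized_powersetCard _ _).isAntichain h𝒜'
        (fun S hS => succ_notMem_of_subset_Icc (hlevel S hS).1) hnotMem
        (fun S hS A hA => (hlevel S hS).2 ▸ hℓ A hA)
    · simp only [mem_union, mem_image]
      rintro _ (hS | ⟨A, hA, rfl⟩)
      · have := (hlevel _ hS).2
        omega
      · have := card_insert_le (n + 1) A
        have := hℓ A hA
        omega
    · calc _ ≤ n.choose L + #((topSlice n D).filter fun A => SpecialPoint n A ∧ #A < L) :=
            card_filter_specialPoint_succ_le hD.subset_Icc
        _ ≤ n.choose L + #𝒜' := by gcongr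
        _ = _ := by
          rw [card_union_of_disjoint hdisj, card_powersetCard, Nat.card_Icc, add_tsub_cancel_right,
            card_image_of_injOn fun A hA B hB =>
              (insert_eq_insert_iff (hnotMem A hA) (hnotMem B hB)).1]

/-- For a binary downset `D` of `B(n)` (an initial segment of the binary order),
the width of `D` equals the number of special points contained in `D`. -/
theorem width_eq_special (n : ℕ) (D : Finset (Finset ℕ))
    (hD : ∀ A ∈ D, A ⊆ Finset.Icc 1 n)
    (hinit : ∀ A ∈ D, ∀ B ⊆ Finset.Icc 1 n, binLT B A → B ∈ D) :
    width D = (D.filter (fun A => SpecialPoint n A)).card := by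
  have hbin : IsBinaryDownset n D := ⟨hD, hinit⟩
  refine le_antisymm (width_le fun 𝒜 h𝒜D h𝒜 => card_le_card_filter_specialPoint hD
    (fun A hA B hBA => hbin.mem_of_subset hA hBA) h𝒜D h𝒜) ?_
  obtain ⟨𝒜, h𝒜D, h𝒜, -, hcard⟩ := hbin.exists_isAntichain (n + 1)
  calc #(D.filter fun A => SpecialPoint n A)
      = #(D.filter fun A => SpecialPoint n A ∧ #A < n + 1) := by
        refine congrArg card (filter_congr fun A hA => (and_iff_left ?_).symm)
        simpa using card_le_card (hD A hA)
    _ ≤ #𝒜 := hcard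
    _ ≤ width D := le_width h𝒜D h𝒜
end

section
/- Let D be a downset in B(n) and let 𝐂 be an SD-partition of D. For each i with 1 ≤ i ≤ n, the set M_i of pairs {X, Y} with X ∈ D of size i−1, Y ∈ D of size i, X ⊂ Y, and X, Y belonging to the same chain of 𝐂, is a maximum matching in the bipartite containment graph G_i on parts D ∩ L_{i−1} and D ∩ L_i. -/
open scoped Classical

/-- A skipless chain: totally ordered by inclusion, cardinalities forming an
interval of integers. -/
def IsSkiplessChain (C : Finset (Finset ℕ)) : Prop :=
  (∀ X ∈ C, ∀ Y ∈ C, X ⊆ Y ∨ Y ⊆ X) ∧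
  (∀ X ∈ C, ∀ Y ∈ C, ∀ m, X.card ≤ m → m ≤ Y.card → ∃ Z ∈ C, Z.card = m)

/-- An SD-partition of `D`: a partition of `D` into exactly `w(D)` skipless chains. -/
def IsSDPartition (D : Finset (Finset ℕ)) (P : Finset (Finset (Finset ℕ))) : Prop :=
  P.card = width D ∧
  (∀ c ∈ P, c.Nonempty ∧ IsSkiplessChain c) ∧
  (∀ c ∈ P, ∀ c' ∈ P, c ≠ c' → Disjoint c c') ∧
  P.biUnion id = D

/-- A matching in the bipartite containment graph `G_i` on the parts
`D ∩ L_{i-1}` and `D ∩ L_i`: a set of edges `(X, Y)` with `X, Y ∈ D`,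
`|X| = i - 1`, `|Y| = i`, `X ⊂ Y`, no two edges sharing an endpoint. -/
def IsMatching (D : Finset (Finset ℕ)) (i : ℕ) (M : Finset (Finset ℕ × Finset ℕ)) : Prop :=
  (∀ e ∈ M, e.1 ∈ D ∧ e.2 ∈ D ∧ e.1.card + 1 = i ∧ e.2.card = i ∧ e.1 ⊂ e.2) ∧
  (∀ e ∈ M, ∀ f ∈ M, e ≠ f → e.1 ≠ f.1 ∧ e.2 ≠ f.2)

/-!
A maximum antichain `A` has `w(D)` members, one in each chain of the partition, since two
members of `A` never share a chain. Call a member of level `i - 1` *low* if the `A`-member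
of its chain has size at least `i`, and a member of level `i` *high* if the `A`-member of
its chain has size less than `i`. For an edge `X ⊂ Y` of `G_i` with `X` not low and `Y` not
high, the `A`-members `a ⊆ X ⊂ Y ⊆ b` of their chains would be comparable; so the low and
high members cover `G_i`, and every matching is at most as large as this cover. By
skiplessness the chain of a low or high member also meets the other level, giving a chain
edge through it, and no chain edge has two such ends; so the cover is no larger than the
chain matching.
-/

open Finset

lemma exists_antichain_card_eq_width (D : Finset (Finset ℕ)) :
    ∃ A ⊆ D, IsAntichain (· ⊆ ·) (A : Set (Finset ℕ)) ∧ A.card = width D := by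
  obtain ⟨A, hA, hcard⟩ := exists_mem_eq_sup
    (D.powerset.filter fun A => ∀ x ∈ A, ∀ y ∈ A, x ≠ y → ¬ x ⊆ y) ⟨∅, by simp⟩ card
  rw [mem_filter, mem_powerset] at hA
  exact ⟨A, hA.1, hA.2, hcard.symm⟩

namespace IsSkiplessChain

variable {c : Finset (Finset ℕ)} {X Y : Finset ℕ}

lemma subset_of_card_le (hc : IsSkiplessChain c) (hX : X ∈ c) (hY : Y ∈ c)
    (h : X.card ≤ Y.card) : X ⊆ Y :=
  (hc.1 X hX Y hY).elim id fun hYX => (eq_of_subset_of_card_le hYX h).ge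

lemma eq_of_card_eq (hc : IsSkiplessChain c) (hX : X ∈ c) (hY : Y ∈ c)
    (h : X.card = Y.card) : X = Y :=
  (hc.subset_of_card_le hX hY h.le).antisymm (hc.subset_of_card_le hY hX h.ge)

lemma eq_of_mem_antichain (hc : IsSkiplessChain c) {A : Finset (Finset ℕ)}
    (hA : IsAntichain (· ⊆ ·) (A : Set (Finset ℕ))) (hXA : X ∈ A) (hYA : Y ∈ A)
    (hX : X ∈ c) (hY : Y ∈ c) : X = Y :=
  (hc.1 X hX Y hY).elim (hA.eq hXA hYA) fun h => (hA.eq hYA hXA h).symm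

end IsSkiplessChain

/-- The chain matching `M_i`. -/
noncomputable def chainPairs (D : Finset (Finset ℕ)) (CC : Finset (Finset (Finset ℕ))) (i : ℕ) :
    Finset (Finset ℕ × Finset ℕ) :=
  (D ×ˢ D).filter (fun e =>
    e.1.card + 1 = i ∧ e.2.card = i ∧ e.1 ⊂ e.2 ∧ ∃ c ∈ CC, e.1 ∈ c ∧ e.2 ∈ c)

namespace IsSDPartition

variable {D : Finset (Finset ℕ)} {CC : Finset (Finset (Finset ℕ))} {c c' : Finset (Finset ℕ)}
  {Z : Finset ℕ}

lemma isSkiplessChain (hCC : IsSDPartition D CC) (hc : c ∈ CC) : IsSkiplessChain c :=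
  (hCC.2.1 c hc).2

lemma subset (hCC : IsSDPartition D CC) (hc : c ∈ CC) : c ⊆ D := fun _ hZ =>
  hCC.2.2.2 ▸ mem_biUnion.2 ⟨c, hc, hZ⟩

lemma exists_mem (hCC : IsSDPartition D CC) (hZ : Z ∈ D) : ∃ c ∈ CC, Z ∈ c := by
  rw [← hCC.2.2.2] at hZ
  simpa using hZ

lemma eq_of_mem (hCC : IsSDPartition D CC) (hc : c ∈ CC) (hc' : c' ∈ CC) (hZc : Z ∈ c)
    (hZc' : Z ∈ c') : c = c' :=
  by_contra fun hne => disjoint_left.1 (hCC.2.2.1 c hc c' hc' hne) hZc hZc'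

lemma exists_mem_antichain (hCC : IsSDPartition D CC) {A : Finset (Finset ℕ)} (hAD : A ⊆ D)
    (hA : IsAntichain (· ⊆ ·) (A : Set (Finset ℕ))) (hAcard : A.card = width D)
    (hc : c ∈ CC) : ∃ a ∈ A, a ∈ c := by
  by_contra! hmiss
  have : A.card ≤ (CC.erase c).card := by
    refine card_le_card_of_forall_subsingleton (fun a c' => a ∈ c') (fun a ha => ?_) ?_
    · obtain ⟨c', hc', hac'⟩ := hCC.exists_mem (hAD ha)
      exact ⟨c', mem_erase.2 ⟨fun h => hmiss a ha (h ▸ hac'), hc'⟩, hac'⟩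
    · intro c' hc' a ⟨ha, hac'⟩ b ⟨hb, hbc'⟩
      exact (hCC.isSkiplessChain (mem_of_mem_erase hc')).eq_of_mem_antichain hA ha hb hac' hbc'
  rw [card_erase_of_mem hc] at this
  have hpos : 0 < CC.card := card_pos.2 ⟨c, hc⟩
  have := hCC.1
  omega

lemma isMatching_chainPairs (hCC : IsSDPartition D CC) (i : ℕ) :
    IsMatching D i (chainPairs D CC i) := by
  refine ⟨fun e he => ?_, fun e he f hf hne => ?_⟩
  · obtain ⟨hD, h1, h2, hss, -⟩ := mem_filter.1 he
    exact ⟨(mem_product.1 hD).1, (mem_product.1 hD).2, h1, h2, hss⟩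
  · obtain ⟨-, he1, he2, -, c, hc, hec1, hec2⟩ := mem_filter.1 he
    obtain ⟨-, hf1, hf2, -, c', hc', hfc1, hfc2⟩ := mem_filter.1 hf
    have hchain := hCC.isSkiplessChain hc
    constructor
    · intro h
      obtain rfl := hCC.eq_of_mem hc hc' hec1 (h ▸ hfc1)
      exact hne (Prod.ext h (hchain.eq_of_card_eq hec2 hfc2 (by omega)))
    · intro h
      obtain rfl := hCC.eq_of_mem hc hc' hec2 (h ▸ hfc2)
      exact hne (Prod.ext (hchain.eq_of_card_eq hec1 hfc1 (by omega)) h)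

lemma mem_chainPairs (hCC : IsSDPartition D CC) (hc : c ∈ CC) {X Y : Finset ℕ} {i : ℕ}
    (hX : X ∈ c) (hY : Y ∈ c) (hXi : X.card + 1 = i) (hYi : Y.card = i) :
    (X, Y) ∈ chainPairs D CC i := by
  have hXY : X ⊆ Y := (hCC.isSkiplessChain hc).subset_of_card_le hX hY (by omega)
  have hne : X ≠ Y := by rintro rfl; omega
  exact mem_filter.2 ⟨mem_product.2 ⟨hCC.subset hc hX, hCC.subset hc hY⟩, hXi, hYi,
    hXY.ssubset_of_ne hne, c, hc, hX, hY⟩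

end IsSDPartition

lemma IsMatching.card_le_of_forall_mem_or_mem {D : Finset (Finset ℕ)} {i : ℕ}
    {M : Finset (Finset ℕ × Finset ℕ)} (hM : IsMatching D i M) {K : Finset (Finset ℕ)}
    (hK : ∀ e ∈ M, e.1 ∈ K ∨ e.2 ∈ K) : M.card ≤ K.card := by
  refine card_le_card_of_forall_subsingleton (fun e Z => Z = e.1 ∨ Z = e.2)
    (fun e he => (hK e he).elim (fun h => ⟨_, h, .inl rfl⟩) fun h => ⟨_, h, .inr rfl⟩) ?_
  intro Z _ e ⟨he, hZe⟩ f ⟨hf, hZf⟩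
  by_contra hne
  obtain ⟨hfst, hsnd⟩ := hM.2 e he f hf hne
  obtain ⟨-, -, he1, he2, -⟩ := hM.1 e he
  obtain ⟨-, -, hf1, hf2, -⟩ := hM.1 f hf
  rcases hZe with rfl | rfl <;> rcases hZf with hZf | hZf
  · exact hfst hZf
  · have := congrArg card hZf; omega
  · have := congrArg card hZf; omega
  · exact hsnd hZf

/-- The low members of level `i - 1` together with the high members of level `i`,
relative to the antichain `A`. -/
noncomputable def levelCover (D : Finset (Finset ℕ)) (CC : Finset (Finset (Finset ℕ)))
    (A : Finset (Finset ℕ)) (i : ℕ) : Finset (Finset ℕ) :=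
  D.filter fun Z => ∃ c ∈ CC, ∃ a ∈ A, Z ∈ c ∧ a ∈ c ∧
    (Z.card + 1 = i ∧ i ≤ a.card ∨ Z.card = i ∧ a.card < i)

section LevelCover

variable {D : Finset (Finset ℕ)} {CC : Finset (Finset (Finset ℕ))} {A : Finset (Finset ℕ)}
  {i : ℕ}

lemma mem_levelCover_or_mem_levelCover (hCC : IsSDPartition D CC) (hAD : A ⊆ D)
    (hA : IsAntichain (· ⊆ ·) (A : Set (Finset ℕ))) (hAcard : A.card = width D)
    {X Y : Finset ℕ} (hX : X ∈ D) (hY : Y ∈ D)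
    (hXi : X.card + 1 = i) (hYi : Y.card = i) (hXY : X ⊂ Y) :
    X ∈ levelCover D CC A i ∨ Y ∈ levelCover D CC A i := by
  obtain ⟨c, hc, hXc⟩ := hCC.exists_mem hX
  obtain ⟨a, ha, hac⟩ := hCC.exists_mem_antichain hAD hA hAcard hc
  obtain ⟨c', hc', hYc'⟩ := hCC.exists_mem hY
  obtain ⟨b, hb, hbc'⟩ := hCC.exists_mem_antichain hAD hA hAcard hc'
  by_contra! hnot
  have ha_lt : a.card < i := by
    by_contra! h
    exact hnot.1 (mem_filter.2 ⟨hX, c, hc, a, ha, hXc, hac, .inl ⟨hXi, h⟩⟩)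
  have hb_ge : i ≤ b.card := by
    by_contra! h
    exact hnot.2 (mem_filter.2 ⟨hY, c', hc', b, hb, hYc', hbc', .inr ⟨hYi, h⟩⟩)
  have haX : a ⊆ X := (hCC.isSkiplessChain hc).subset_of_card_le hac hXc (by omega)
  have hYb : Y ⊆ b := (hCC.isSkiplessChain hc').subset_of_card_le hYc' hbc' (by omega)
  obtain rfl : a = b := hA.eq ha hb (haX.trans (hXY.subset.trans hYb))
  omega

lemma not_fst_mem_levelCover_and_snd_mem (hCC : IsSDPartition D CC)
    (hA : IsAntichain (· ⊆ ·) (A : Set (Finset ℕ))) {e : Finset ℕ × Finset ℕ}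
    (he : e ∈ chainPairs D CC i) :
    ¬ (e.1 ∈ levelCover D CC A i ∧ e.2 ∈ levelCover D CC A i) := by
  rintro ⟨h1, h2⟩
  obtain ⟨-, he1, he2, -, c, hc, hec1, hec2⟩ := mem_filter.1 he
  obtain ⟨-, c1, hc1, a, ha, h1c, hac, ha_level⟩ := mem_filter.1 h1
  obtain ⟨-, c2, hc2, b, hb, h2c, hbc, hb_level⟩ := mem_filter.1 h2
  obtain rfl := hCC.eq_of_mem hc1 hc h1c hec1
  obtain rfl := hCC.eq_of_mem hc2 hc1 h2c hec2
  obtain rfl := (hCC.isSkiplessChain hc1).eq_of_mem_antichain hA ha hb hac hbc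
  omega

lemma exists_chainPairs_of_mem_levelCover (hCC : IsSDPartition D CC) {Z : Finset ℕ}
    (hZ : Z ∈ levelCover D CC A i) : ∃ e ∈ chainPairs D CC i, Z = e.1 ∨ Z = e.2 := by
  obtain ⟨-, c, hc, a, -, hZc, hac, hlevel⟩ := mem_filter.1 hZ
  have hchain := hCC.isSkiplessChain hc
  rcases hlevel with ⟨hZi, hai⟩ | ⟨hZi, hai⟩
  · obtain ⟨Y, hYc, hYi⟩ := hchain.2 Z hZc a hac i (by omega) hai
    exact ⟨(Z, Y), hCC.mem_chainPairs hc hZc hYc hZi hYi, .inl rfl⟩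
  · obtain ⟨X, hXc, hXi⟩ := hchain.2 a hac Z hZc (i - 1) (by omega) (by omega)
    exact ⟨(X, Z), hCC.mem_chainPairs hc hXc hZc (by omega) hZi, .inr rfl⟩

lemma card_levelCover_le (hCC : IsSDPartition D CC)
    (hA : IsAntichain (· ⊆ ·) (A : Set (Finset ℕ))) :
    (levelCover D CC A i).card ≤ (chainPairs D CC i).card := by
  refine card_le_card_of_forall_subsingleton (fun Z e => Z = e.1 ∨ Z = e.2)
    (fun Z hZ => exists_chainPairs_of_mem_levelCover hCC hZ) ?_
  intro e he Z ⟨hZ, hZe⟩ Z' ⟨hZ', hZ'e⟩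
  have := not_fst_mem_levelCover_and_snd_mem hCC hA he
  rcases hZe with rfl | rfl <;> rcases hZ'e with rfl | rfl <;> tauto

end LevelCover

theorem sd_partition_gives_max_matchings_general (D : Finset (Finset ℕ))
    (CC : Finset (Finset (Finset ℕ))) (hCC : IsSDPartition D CC)
    (i : ℕ) :
    IsMatching D i
      ((D ×ˢ D).filter (fun e =>
        e.1.card + 1 = i ∧ e.2.card = i ∧ e.1 ⊂ e.2 ∧ ∃ c ∈ CC, e.1 ∈ c ∧ e.2 ∈ c)) ∧
    ∀ M : Finset (Finset ℕ × Finset ℕ), IsMatching D i M →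
      M.card ≤ ((D ×ˢ D).filter (fun e =>
        e.1.card + 1 = i ∧ e.2.card = i ∧ e.1 ⊂ e.2 ∧ ∃ c ∈ CC, e.1 ∈ c ∧ e.2 ∈ c)).card := by
  obtain ⟨A, hAD, hA, hAcard⟩ := exists_antichain_card_eq_width D
  refine ⟨hCC.isMatching_chainPairs i, fun M hM => ?_⟩
  have hcover : ∀ e ∈ M, e.1 ∈ levelCover D CC A i ∨ e.2 ∈ levelCover D CC A i :=
    fun e he =>
      let ⟨hX, hY, hXi, hYi, hXY⟩ := hM.1 e he
      mem_levelCover_or_mem_levelCover hCC hAD hA hAcard hX hY hXi hYi hXY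
  exact (hM.card_le_of_forall_mem_or_mem hcover).trans (card_levelCover_le hCC hA)

/-- For a downset `D` with an SD-partition `CC`, the pairs of consecutive-level
members of a common chain form a maximum matching in each bipartite containment
graph `G_i` between levels `i-1` and `i` of `D`. -/
theorem sd_partition_gives_max_matchings (n : ℕ) (D : Finset (Finset ℕ))
    (hD : ∀ A ∈ D, A ⊆ Finset.Icc 1 n)
    (hdown : ∀ A ∈ D, ∀ B ⊆ A, B ∈ D)
    (CC : Finset (Finset (Finset ℕ))) (hCC : IsSDPartition D CC)
    (i : ℕ) (hi : i ∈ Finset.Icc 1 n) :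
    IsMatching D i
      ((D ×ˢ D).filter (fun e =>
        e.1.card + 1 = i ∧ e.2.card = i ∧ e.1 ⊂ e.2 ∧ ∃ c ∈ CC, e.1 ∈ c ∧ e.2 ∈ c)) ∧
    ∀ M : Finset (Finset ℕ × Finset ℕ), IsMatching D i M →
      M.card ≤ ((D ×ˢ D).filter (fun e =>
        e.1.card + 1 = i ∧ e.2.card = i ∧ e.1 ⊂ e.2 ∧ ∃ c ∈ CC, e.1 ∈ c ∧ e.2 ∈ c)).card :=
  sd_partition_gives_max_matchings_general D CC hCC i
end

section
/- Let m ≥ 1 and 1 ≤ k ≤ n−1. There is no convex subset T of B(n) with T ⊆ L_{k−1} ∪ L_k ∪ L_{k+1} such that T can be partitioned into m skipless three-element chains C_i ⊂ B_i ⊂ A_i (with |C_i| = k−1, |B_i| = k, |A_i| = k+1 for each i = 1,…,m) and w(T) = m. -/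
open scoped Classical

/-!
Every set of size `k` lying between some `C c` and some `A a` is in `T` by convexity, hence is some
`B l`. If `C ⊆ B ⊆ A` with consecutive sizes, the interval `[C, A]` contains exactly one other middle
set `B' = C ∪ (A \ B)`, and it satisfies `B ∪ B' = A`, `B ∩ B' = C`. So the `A a` above `B i` are
recovered injectively from the `B l ≠ B i` above `C i`, and the `C c` below `B i` injectively from the
`B l ≠ B i` below `A i`. With `N(B ⊆ A)` and `N(C ⊆ B)` the numbers of comparable pairs, summing over
`i` gives `N(B ⊆ A) + m ≤ N(C ⊆ B)` and `N(C ⊆ B) + m ≤ N(B ⊆ A)`, which forces `m = 0`.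
-/

open Finset

namespace Finset

variable {α : Type*} [DecidableEq α]

theorem exists_ne_middle {C B A : Finset α} (hCB : C ⊆ B) (hBA : B ⊆ A)
    (hB : #B = #C + 1) (hA : #A = #B + 1) :
    ∃ B', C ⊆ B' ∧ B' ⊆ A ∧ #B' = #B ∧ B' ≠ B ∧ B ∪ B' = A ∧ B ∩ B' = C := by
  have hinter : B ∩ (C ∪ A \ B) = C := by
    rw [inter_union_distrib_left, inter_sdiff_self, union_empty, inter_eq_right.2 hCB]
  refine ⟨C ∪ A \ B, subset_union_left, union_subset (hCB.trans hBA) sdiff_subset, ?_, ?_, ?_,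
    hinter⟩
  · rw [card_union_of_disjoint (disjoint_sdiff.mono_left hCB), card_sdiff_of_subset hBA]
    omega
  · intro h
    rw [h, inter_self] at hinter
    subst hinter
    omega
  · rw [← union_assoc, union_eq_left.2 hCB, union_sdiff_of_subset hBA]

end Finset

section ChainFamily

variable {α ι : Type*} [DecidableEq α] {A B C : ι → Finset α} {k : ℕ}

theorem exists_ne_middle_of_forall_middle_mem_range
    (hC : ∀ i, #(C i) + 1 = k) (hB : ∀ i, #(B i) = k) (hA : ∀ i, #(A i) = k + 1)
    (hmid : ∀ c a S, C c ⊆ S → S ⊆ A a → #S = k → ∃ l, B l = S)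
    {c b a : ι} (hcb : C c ⊆ B b) (hba : B b ⊆ A a) :
    ∃ l ≠ b, C c ⊆ B l ∧ B l ⊆ A a ∧ B b ∪ B l = A a ∧ B b ∩ B l = C c := by
  obtain ⟨S, hcS, hSa, hS, hSb, hunion, hinter⟩ :=
    exists_ne_middle hcb hba (by rw [hB, hC]) (by rw [hA, hB])
  obtain ⟨l, rfl⟩ := hmid c a S hcS hSa (by rw [hS, hB])
  exact ⟨l, fun h => hSb (h ▸ rfl), hcS, hSa, hunion, hinter⟩

variable [Fintype ι] [DecidableEq ι]
  (hC : ∀ i, #(C i) + 1 = k) (hB : ∀ i, #(B i) = k) (hA : ∀ i, #(A i) = k + 1)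
  (hmid : ∀ c a S, C c ⊆ S → S ⊆ A a → #S = k → ∃ l, B l = S)
include hC hB hA hmid

theorem card_supersets_add_one_le (hAinj : Function.Injective A) {i : ι} (hCB : C i ⊆ B i) :
    #{a | B i ⊆ A a} + 1 ≤ #{l | C i ⊆ B l} := by
  have hi : i ∈ ({l | C i ⊆ B l} : Finset ι) := mem_filter.2 ⟨mem_univ i, hCB⟩
  rw [← card_erase_add_one hi, add_le_add_iff_right]
  refine card_le_card_of_forall_subsingleton (fun a l => A a = B i ∪ B l) ?_ ?_
  · intro a ha
    obtain ⟨l, hli, hcl, -, hunion, -⟩ :=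
      exists_ne_middle_of_forall_middle_mem_range hC hB hA hmid hCB (mem_filter.1 ha).2
    exact ⟨l, mem_erase.2 ⟨hli, mem_filter.2 ⟨mem_univ l, hcl⟩⟩, hunion.symm⟩
  · rintro l - a₁ ⟨-, h₁⟩ a₂ ⟨-, h₂⟩
    exact hAinj (h₁.trans h₂.symm)

theorem card_subsets_add_one_le (hCinj : Function.Injective C) {i : ι} (hBA : B i ⊆ A i) :
    #{c | C c ⊆ B i} + 1 ≤ #{l | B l ⊆ A i} := by
  have hi : i ∈ ({l | B l ⊆ A i} : Finset ι) := mem_filter.2 ⟨mem_univ i, hBA⟩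
  rw [← card_erase_add_one hi, add_le_add_iff_right]
  refine card_le_card_of_forall_subsingleton (fun c l => C c = B i ∩ B l) ?_ ?_
  · intro c hc
    obtain ⟨l, hli, -, hla, -, hinter⟩ :=
      exists_ne_middle_of_forall_middle_mem_range hC hB hA hmid (mem_filter.1 hc).2 hBA
    exact ⟨l, mem_erase.2 ⟨hli, mem_filter.2 ⟨mem_univ l, hla⟩⟩, hinter.symm⟩
  · rintro l - c₁ ⟨-, h₁⟩ c₂ ⟨-, h₂⟩
    exact hCinj (h₁.trans h₂.symm)

theorem isEmpty_of_forall_middle_mem_range (hCB : ∀ i, C i ⊆ B i) (hBA : ∀ i, B i ⊆ A i)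
    (hAinj : Function.Injective A) (hCinj : Function.Injective C) : IsEmpty ι := by
  have hup : ∑ i, (#{a | B i ⊆ A a} + 1) ≤ ∑ i, #{l | C i ⊆ B l} :=
    sum_le_sum fun i _ => card_supersets_add_one_le hC hB hA hmid hAinj (hCB i)
  have hdown : ∑ i, (#{c | C c ⊆ B i} + 1) ≤ ∑ i, #{l | B l ⊆ A i} :=
    sum_le_sum fun i _ => card_subsets_add_one_le hC hB hA hmid hCinj (hBA i)
  have hBA_pairs : ∑ i, #{a | B i ⊆ A a} = ∑ a, #{i | B i ⊆ A a} :=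
    sum_card_bipartiteAbove_eq_sum_card_bipartiteBelow _
  have hCB_pairs : ∑ c, #{l | C c ⊆ B l} = ∑ l, #{c | C c ⊆ B l} :=
    sum_card_bipartiteAbove_eq_sum_card_bipartiteBelow _
  simp only [sum_add_distrib, sum_const, card_univ, smul_eq_mul, mul_one] at hup hdown
  rw [← Fintype.card_eq_zero_iff]
  omega

end ChainFamily

theorem no_three_level_convex_general (m k : ℕ) (hm : 1 ≤ m)
    (A B C : Fin m → Finset ℕ)
    (hCcard : ∀ i, (C i).card + 1 = k)
    (hBcard : ∀ i, (B i).card = k)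
    (hAcard : ∀ i, (A i).card = k + 1)
    (hCB : ∀ i, C i ⊂ B i) (hBA : ∀ i, B i ⊂ A i)
    (hAinj : Function.Injective A)
    (hCinj : Function.Injective C)
    (T : Finset (Finset ℕ))
    (hT : T = Finset.univ.image C ∪ Finset.univ.image B ∪ Finset.univ.image A)
    (hconv : ∀ X ∈ T, ∀ Y ∈ T, ∀ Z, X ⊆ Z → Z ⊆ Y → Z ∈ T) :
    False := by
  subst hT
  have hmid : ∀ c a S, C c ⊆ S → S ⊆ A a → #S = k → ∃ l, B l = S := by
    intro c a S hcS hSa hS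
    have hST := hconv (C c) (by simp) (A a) (by simp) S hcS hSa
    simp only [mem_union, mem_image, mem_univ, true_and] at hST
    rcases hST with (⟨l, rfl⟩ | ⟨l, rfl⟩) | ⟨l, rfl⟩
    · have := hCcard l
      omega
    · exact ⟨l, rfl⟩
    · have := hAcard l
      omega
  exact (isEmpty_of_forall_middle_mem_range hCcard hBcard hAcard hmid
    (fun i => (hCB i).subset) (fun i => (hBA i).subset) hAinj hCinj).false ⟨0, hm⟩

/-- There is no three-level convex subset `T` of `B(n)` (lying in levels
`k-1`, `k`, `k+1`) of width `m` that can be partitioned into `m` skipless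
three-element chains `C_i ⊂ B_i ⊂ A_i`. -/
theorem no_three_level_convex (n m k : ℕ) (hm : 1 ≤ m) (hk : 1 ≤ k) (hkn : k + 1 ≤ n)
    (A B C : Fin m → Finset ℕ)
    (hAsub : ∀ i, A i ⊆ Finset.Icc 1 n)
    (hCcard : ∀ i, (C i).card + 1 = k)
    (hBcard : ∀ i, (B i).card = k)
    (hAcard : ∀ i, (A i).card = k + 1)
    (hCB : ∀ i, C i ⊂ B i) (hBA : ∀ i, B i ⊂ A i)
    (hAinj : Function.Injective A)
    (hBinj : Function.Injective B)
    (hCinj : Function.Injective C)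
    (T : Finset (Finset ℕ))
    (hT : T = Finset.univ.image C ∪ Finset.univ.image B ∪ Finset.univ.image A)
    (hconv : ∀ X ∈ T, ∀ Y ∈ T, ∀ Z, X ⊆ Z → Z ⊆ Y → Z ∈ T)
    (hwidth : width T = m) :
    False :=
  no_three_level_convex_general m k hm A B C hCcard hBcard hAcard hCB hBA hAinj hCinj T hT hconv
end
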